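/- Let R ≅ F_1 × ··· × F_n, where each F_i is a field and n ≥ 3. Then the boundary ∂(Γ(R)) equals V(Γ(R)) \ Max(R), and two vertices I, J ∈ V(Γ(R)) \ Max(R) are mutually maximally distant in Γ(R) (i.e., adjacent in Γ(R)_SR) if and only if I + J ≠ R, I ⊄ J and J ⊄ I; in other words, Γ(R)_SR equals the graph Γ(R)* obtained from Γ(R)** by deleting all isolated vertices. -/

import Mathlib

/-! Common definitions: metric/strong-metric dimension, strong resolving graph,
independence number, and the co-maximal ideal graph of a commutative ring. -/

namespace CoMax

variable {V : Type*}

/-- `S` is a resolving set for `G`: the metric representations with respect to `S`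
of vertices outside `S` are pairwise distinct. -/
def IsResolvingSet (G : SimpleGraph V) (S : Set V) : Prop :=
  ∀ u v : V, u ∉ S → v ∉ S → (∀ w ∈ S, G.dist u w = G.dist v w) → u = v

/-- The metric dimension of `G`: the smallest cardinality of a resolving set. -/
noncomputable def metricDim (G : SimpleGraph V) : Cardinal :=
  ⨅ S : {S : Set V // IsResolvingSet G S}, Cardinal.mk ↥(S.1)

/-- `w` strongly resolves `u` and `v`: there is a shortest path from `u` to `w`
containing `v`, or a shortest path from `v` to `w` containing `u`. -/
def StronglyResolves (G : SimpleGraph V) (w u v : V) : Prop :=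
  G.dist u v + G.dist v w = G.dist u w ∨ G.dist v u + G.dist u w = G.dist v w

/-- `S` is a strong resolving set for `G`: every pair of distinct vertices is
strongly resolved by some vertex of `S`. -/
def IsStrongResolvingSet (G : SimpleGraph V) (S : Set V) : Prop :=
  ∀ u v : V, u ≠ v → ∃ w ∈ S, StronglyResolves G w u v

/-- The strong metric dimension of `G`: the smallest cardinality of a strong
resolving set. -/
noncomputable def sdim (G : SimpleGraph V) : Cardinal :=
  ⨅ S : {S : Set V // IsStrongResolvingSet G S}, Cardinal.mk ↥(S.1)

/-- `u` is maximally distant from `v`: `d(v,w) ≤ d(u,v)` for every neighbor `w` of `u`. -/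
def MaximallyDistantFrom (G : SimpleGraph V) (u v : V) : Prop :=
  ∀ w : V, G.Adj u w → G.dist v w ≤ G.dist u v

/-- `u` and `v` are mutually maximally distant. -/
def MutuallyMaximallyDistant (G : SimpleGraph V) (u v : V) : Prop :=
  MaximallyDistantFrom G u v ∧ MaximallyDistantFrom G v u

/-- The boundary `∂(G)` of `G`. -/
def boundarySet (G : SimpleGraph V) : Set V :=
  {u | ∃ v, v ≠ u ∧ MutuallyMaximallyDistant G u v}

/-- The strong resolving graph `G_SR` of `G`: vertices are the boundary vertices,
two of them being adjacent iff they are mutually maximally distant. -/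
def srGraph (G : SimpleGraph V) : SimpleGraph ↥(boundarySet G) where
  Adj u v := u ≠ v ∧ MutuallyMaximallyDistant G u.1 v.1
  symm := ⟨fun u v h => ⟨h.1.symm, h.2.2, h.2.1⟩⟩
  loopless := ⟨fun u h => h.1 rfl⟩

/-- The independence number `β(G)` of `G`. -/
noncomputable def indepNum (G : SimpleGraph V) : ℕ :=
  sSup {k | ∃ S : Set V,
    (∀ u ∈ S, ∀ v ∈ S, u ≠ v → ¬ G.Adj u v) ∧ S.Finite ∧ S.ncard = k}

/-- The vertices of the co-maximal ideal graph of `R`: proper ideals of `R`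
not contained in the Jacobson radical of `R`. -/
def IsComaxVertex (R : Type*) [CommRing R] (I : Ideal R) : Prop :=
  I ≠ ⊤ ∧ ¬ I ≤ Ideal.jacobson (⊥ : Ideal R)

/-- The co-maximal ideal graph `Γ(R)`: distinct vertices `I`, `J` are adjacent
iff `I + J = R`. -/
def comaxGraph (R : Type*) [CommRing R] :
    SimpleGraph {I : Ideal R // IsComaxVertex R I} where
  Adj I J := I ≠ J ∧ I.1 ⊔ J.1 = ⊤
  symm := ⟨fun I J h => ⟨h.1.symm, by rw [sup_comm]; exact h.2⟩⟩
  loopless := ⟨fun I h => h.1 rfl⟩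

/-- The graph `Γ(R)**`: same vertices as `Γ(R)`, with distinct `I`, `J` adjacent
iff `I + J ≠ R`, `I ⊄ J` and `J ⊄ I`. -/
def comaxDoubleStar (R : Type*) [CommRing R] :
    SimpleGraph {I : Ideal R // IsComaxVertex R I} where
  Adj I J := I ≠ J ∧ I.1 ⊔ J.1 ≠ ⊤ ∧ ¬ I.1 ≤ J.1 ∧ ¬ J.1 ≤ I.1
  symm := ⟨fun I J h => ⟨h.1.symm, by rw [sup_comm]; exact h.2.1, h.2.2.2, h.2.2.1⟩⟩
  loopless := ⟨fun I h => h.1 rfl⟩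

/-- The ideal of a product ring `Π i, R i` whose members are the elements all of
whose components lie in the given family of ideals. -/
def piIdeal {ι : Type*} {R : ι → Type*} [∀ i, CommRing (R i)]
    (I : ∀ i, Ideal (R i)) : Ideal (∀ i, R i) where
  carrier := {x | ∀ i, x i ∈ I i}
  add_mem' := fun ha hb i => add_mem (ha i) (hb i)
  zero_mem' := fun i => zero_mem _
  smul_mem' := fun c x hx i => (I i).smul_mem (c i) (hx i)

/-- The `i`-th component of an ideal of a product ring. -/
def comp {ι : Type*} {R : ι → Type*} [∀ i, CommRing (R i)]
    (K : Ideal (∀ i, R i)) (i : ι) : Ideal (R i) :=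
  K.map (Pi.evalRingHom R i)

/-- The relation `I ∼ J`: for each `i`, the `i`-th component of `I` consists of
nilpotents iff the `i`-th component of `J` does. `[I] = [J]` iff `I ∼ J`. -/
def simRel {ι : Type*} {R : ι → Type*} [∀ i, CommRing (R i)]
    (I J : Ideal (∀ i, R i)) : Prop :=
  ∀ i, comp I i ≤ nilradical (R i) ↔ comp J i ≤ nilradical (R i)

open Classical in
/-- The ideal `I′` obtained from `I` by replacing all of its nilpotent components by `0`. -/
noncomputable def primed {ι : Type*} {R : ι → Type*} [∀ i, CommRing (R i)]
    (K : Ideal (∀ i, R i)) : Ideal (∀ i, R i) :=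
  piIdeal fun i => if comp K i ≤ nilradical (R i) then ⊥ else comp K i



/-! ### Auxiliary development for products of fields -/

section Fields

open Finset

variable {n : ℕ} {F : Fin n → Type*} [∀ i, Field (F i)]

lemma exists_not_mem_of_ne_univ' {α : Type*} [Fintype α] {s : Finset α}
    (h : s ≠ Finset.univ) : ∃ a, a ∉ s :=
  not_forall.1 fun hh => h (Finset.eq_univ_iff_forall.2 hh)

lemma mem_piIdeal {ι : Type*} {R : ι → Type*} [∀ i, CommRing (R i)]
    {I : ∀ i, Ideal (R i)} {x : ∀ i, R i} : x ∈ piIdeal I ↔ ∀ i, x i ∈ I i :=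
  Iff.rfl

/-- The ideal of the product determined by a finset of coordinates. -/
def E (s : Finset (Fin n)) : Ideal (∀ i, F i) :=
  piIdeal fun i => if i ∈ s then ⊤ else ⊥

lemma mem_E {s : Finset (Fin n)} {x : ∀ i, F i} :
    x ∈ (E s : Ideal (∀ i, F i)) ↔ ∀ i ∉ s, x i = 0 := by
  rw [E, mem_piIdeal]
  constructor
  · intro h i hi
    have := h i
    simpa [hi] using this
  · intro h i
    by_cases hi : i ∈ s
    · simp [hi]
    · simp [hi, h i hi]

open Classical in
/-- The support finset of an ideal of the product. -/
noncomputable def SSet (I : Ideal (∀ i, F i)) : Finset (Fin n) :=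
  Finset.univ.filter fun i => ∃ x ∈ I, x i ≠ 0

lemma mem_SSet {I : Ideal (∀ i, F i)} {i : Fin n} :
    i ∈ SSet I ↔ ∃ x ∈ I, x i ≠ 0 := by
  simp [SSet]

lemma single_mul (i : Fin n) (a : F i) (x : ∀ i, F i) :
    Pi.single i a * x = Pi.single i (a * x i) := by
  funext j
  by_cases hj : j = i
  · subst hj; simp
  · simp [Pi.single_eq_of_ne hj]

lemma eq_E_SSet (I : Ideal (∀ i, F i)) : I = E (SSet I) := by
  apply le_antisymm
  · intro x hx
    rw [mem_E]
    intro i hi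
    rw [mem_SSet] at hi
    push_neg at hi
    exact hi x hx
  · intro y hy
    rw [mem_E] at hy
    have hrepr : y = ∑ i, Pi.single i (y i) := (Finset.univ_sum_single y).symm
    rw [hrepr]
    apply Ideal.sum_mem
    intro i _
    by_cases hi : i ∈ SSet I
    · rw [mem_SSet] at hi
      obtain ⟨x, hxI, hxi⟩ := hi
      have key : Pi.single i (y i) = Pi.single i (y i * (x i)⁻¹) * x := by
        rw [single_mul, mul_assoc, inv_mul_cancel₀ hxi, mul_one]
      rw [key]
      exact I.mul_mem_left _ hxI
    · rw [hy i hi, Pi.single_zero]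
      exact I.zero_mem

lemma single_one_mem_E {s : Finset (Fin n)} {i : Fin n} (hi : i ∈ s) :
    (Pi.single i 1 : ∀ i, F i) ∈ (E s : Ideal (∀ i, F i)) := by
  rw [mem_E]
  intro j hj
  exact Pi.single_eq_of_ne (fun h => hj (by rw [h]; exact hi)) 1

lemma E_le_E {s t : Finset (Fin n)} :
    (E s : Ideal (∀ i, F i)) ≤ E t ↔ s ⊆ t := by
  constructor
  · intro h i hi
    by_contra hit
    have h2 := h (single_one_mem_E hi)
    rw [mem_E] at h2
    have := h2 i hit
    simp at this
  · intro h x hx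
    rw [mem_E] at hx ⊢
    exact fun i hi => hx i (fun hs => hi (h hs))

lemma E_inj {s t : Finset (Fin n)} (h : (E s : Ideal (∀ i, F i)) = E t) : s = t :=
  subset_antisymm (E_le_E.1 h.le) (E_le_E.1 h.ge)

lemma SSet_E (s : Finset (Fin n)) : SSet (E s : Ideal (∀ i, F i)) = s :=
  E_inj (eq_E_SSet (E s)).symm

lemma E_sup {s t : Finset (Fin n)} :
    (E s : Ideal (∀ i, F i)) ⊔ E t = E (s ∪ t) := by
  classical
  apply le_antisymm
  · exact sup_le (E_le_E.2 subset_union_left) (E_le_E.2 subset_union_right)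
  · intro x hx
    rw [mem_E] at hx
    have hx' : x = (fun i => if i ∈ s then x i else 0) + fun i => if i ∈ s then 0 else x i := by
      funext i
      by_cases hi : i ∈ s <;> simp [hi]
    rw [hx']
    apply Submodule.add_mem_sup
    · rw [mem_E]; intro i hi; simp [hi]
    · rw [mem_E]; intro i hi
      by_cases hi' : i ∈ s
      · simp [hi']
      · simp [hi', hx i (fun h => (mem_union.1 h).elim hi' hi)]

lemma E_eq_top {s : Finset (Fin n)} :
    (E s : Ideal (∀ i, F i)) = ⊤ ↔ s = Finset.univ := by
  constructor
  · intro h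
    by_contra hs
    obtain ⟨i, hi⟩ := not_forall.1 (fun hh => hs (Finset.eq_univ_iff_forall.2 hh))
    have h1 : (1 : ∀ i, F i) ∈ (E s : Ideal (∀ i, F i)) := h ▸ Submodule.mem_top
    rw [mem_E] at h1
    exact one_ne_zero (h1 i hi)
  · intro h
    rw [eq_top_iff]
    intro x _
    rw [mem_E]
    intro i hi
    exact absurd (h ▸ Finset.mem_univ i) hi

lemma E_eq_bot {s : Finset (Fin n)} :
    (E s : Ideal (∀ i, F i)) = ⊥ ↔ s = ∅ := by
  constructor
  · intro h
    rw [Finset.eq_empty_iff_forall_notMem]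
    intro i hi
    have h1 := single_one_mem_E (F := F) hi
    rw [h, Ideal.mem_bot] at h1
    have := congrFun h1 i
    simp at this
  · intro h
    subst h
    rw [eq_bot_iff]
    intro x hx
    rw [mem_E] at hx
    rw [Ideal.mem_bot]
    funext i
    exact hx i (Finset.notMem_empty i)

lemma jacobson_bot_pi :
    Ideal.jacobson (⊥ : Ideal (∀ i, F i)) = ⊥ := by
  rw [eq_bot_iff]
  intro x hx
  rw [Ideal.mem_jacobson_bot] at hx
  rw [Ideal.mem_bot]
  by_contra hx0
  rw [← Ne, Function.ne_iff] at hx0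
  obtain ⟨i, hxi⟩ := hx0
  rw [Pi.zero_apply] at hxi
  have h1 := hx (Pi.single i (-(x i)⁻¹))
  have h2 : IsUnit ((x * Pi.single i (-(x i)⁻¹) + 1) i) := h1.map (Pi.evalRingHom F i)
  have h3 : (x * Pi.single i (-(x i)⁻¹) + 1) i = 0 := by
    simp [mul_neg, mul_inv_cancel₀ hxi]
  rw [h3] at h2
  exact zero_ne_one (isUnit_zero_iff.mp h2)

lemma isMaximal_E_iff {s : Finset (Fin n)} :
    (E s : Ideal (∀ i, F i)).IsMaximal ↔ ∃ a, sᶜ = {a} := by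
  constructor
  · intro h
    have hs : s ≠ Finset.univ := fun hh => h.ne_top (E_eq_top.2 hh)
    obtain ⟨a, ha⟩ := exists_not_mem_of_ne_univ' hs
    refine ⟨a, ?_⟩
    have hlt : (E s : Ideal (∀ i, F i)) < E (insert a s) := by
      refine lt_of_le_of_ne (E_le_E.2 (subset_insert a s)) ?_
      intro hEq
      exact ha (E_inj hEq ▸ mem_insert_self a s)
    have := h.1.2 _ hlt
    have hins : insert a s = Finset.univ := E_eq_top.1 this
    ext b
    simp only [mem_compl, mem_singleton]
    constructor
    · intro hb
      have : b ∈ insert a s := hins ▸ mem_univ b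
      rcases mem_insert.1 this with h' | h'
      · exact h'
      · exact absurd h' hb
    · intro hb; subst hb; exact ha
  · rintro ⟨a, ha⟩
    have has : a ∉ s := by
      have : a ∈ sᶜ := ha ▸ mem_singleton_self a
      simpa using this
    constructor
    constructor
    · intro hh
      exact has (E_eq_top.1 hh ▸ mem_univ a)
    · intro J hJ
      rw [eq_E_SSet J] at hJ ⊢
      have hsub : s ⊆ SSet J := E_le_E.1 hJ.le
      have hne : s ≠ SSet J := fun hh => hJ.ne (by rw [hh])
      rw [E_eq_top]
      rw [Finset.eq_univ_iff_forall]
      intro b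
      by_cases hb : b ∈ s
      · exact hsub hb
      · have hba : b = a := by
          have : b ∈ sᶜ := mem_compl.2 hb
          rw [ha] at this
          exact mem_singleton.1 this
        subst hba
        -- s ⊊ SSet J and sᶜ = {b}, so b ∈ SSet J
        obtain ⟨c, hcJ, hcs⟩ := Finset.exists_of_ssubset (ssubset_of_ne_of_subset hne hsub)
        have : c = b := by
          have : c ∈ sᶜ := mem_compl.2 hcs
          rw [ha] at this
          exact mem_singleton.1 this
        exact this ▸ hcJ

end Fields


section Graph

open Finset SimpleGraph

variable {n : ℕ} {F : Fin n → Type*} [∀ i, Field (F i)]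

/-- The vertex type of the comaximal ideal graph of `∀ i, F i`. -/
abbrev Vx (n : ℕ) (F : Fin n → Type*) [∀ i, Field (F i)] :=
  {I : Ideal (∀ i, F i) // IsComaxVertex (∀ i, F i) I}

lemma vertex_iff {I : Ideal (∀ i, F i)} :
    IsComaxVertex (∀ i, F i) I ↔ SSet I ≠ ∅ ∧ SSet I ≠ Finset.univ := by
  rw [IsComaxVertex, jacobson_bot_pi, le_bot_iff]
  conv_lhs => rw [eq_E_SSet I]
  simp only [ne_eq, E_eq_top, E_eq_bot]
  tauto

lemma vx_ne_empty (u : Vx n F) : SSet u.1 ≠ ∅ := (vertex_iff.1 u.2).1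
lemma vx_ne_univ (u : Vx n F) : SSet u.1 ≠ Finset.univ := (vertex_iff.1 u.2).2

/-- Build a vertex from a nonempty proper finset of coordinates. -/
def mkV (s : Finset (Fin n)) (h1 : s ≠ ∅) (h2 : s ≠ Finset.univ) : Vx n F :=
  ⟨E s, by rw [vertex_iff, SSet_E]; exact ⟨h1, h2⟩⟩

@[simp] lemma SSet_mkV {s : Finset (Fin n)} {h1 h2} :
    SSet ((mkV s h1 h2 : Vx n F)).1 = s := SSet_E s

lemma vx_eq_iff {u v : Vx n F} : u = v ↔ SSet u.1 = SSet v.1 :=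
  ⟨fun h => h ▸ rfl, fun h => Subtype.ext (by rw [eq_E_SSet u.1, eq_E_SSet v.1, h])⟩

lemma sup_eq_top_iff {u v : Vx n F} :
    u.1 ⊔ v.1 = ⊤ ↔ SSet u.1 ∪ SSet v.1 = Finset.univ := by
  conv_lhs => rw [eq_E_SSet u.1, eq_E_SSet v.1]
  rw [E_sup, E_eq_top]

lemma le_iff {u v : Vx n F} : u.1 ≤ v.1 ↔ SSet u.1 ⊆ SSet v.1 := by
  conv_lhs => rw [eq_E_SSet u.1, eq_E_SSet v.1]
  rw [E_le_E]

lemma adj_iff {u v : Vx n F} :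
    (comaxGraph (∀ i, F i)).Adj u v ↔
      SSet u.1 ≠ SSet v.1 ∧ SSet u.1 ∪ SSet v.1 = Finset.univ := by
  have h : (comaxGraph (∀ i, F i)).Adj u v ↔ u ≠ v ∧ u.1 ⊔ v.1 = ⊤ := Iff.rfl
  rw [h, sup_eq_top_iff, ne_eq, vx_eq_iff]

lemma max_iff {u : Vx n F} :
    u.1.IsMaximal ↔ ∃ a, (SSet u.1)ᶜ = {a} := by
  conv_lhs => rw [eq_E_SSet u.1]
  rw [isMaximal_E_iff]

lemma nonmax_iff {u : Vx n F} :
    ¬ u.1.IsMaximal ↔ ∃ b c, b ∉ SSet u.1 ∧ c ∉ SSet u.1 ∧ b ≠ c := by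
  rw [max_iff]
  have h1 : ((SSet u.1)ᶜ).Nonempty := by
    obtain ⟨a, ha⟩ := exists_not_mem_of_ne_univ' (vx_ne_univ u)
    exact ⟨a, Finset.mem_compl.2 ha⟩
  constructor
  · intro h
    have hc1 : (SSet u.1)ᶜ.card ≠ 1 := fun hh => h (Finset.card_eq_one.1 hh)
    have hc0 : 0 < (SSet u.1)ᶜ.card := Finset.card_pos.2 h1
    have : 1 < (SSet u.1)ᶜ.card := by omega
    obtain ⟨b, hb, c, hc, hbc⟩ := Finset.one_lt_card.1 this
    exact ⟨b, c, Finset.mem_compl.1 hb, Finset.mem_compl.1 hc, hbc⟩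
  · rintro ⟨b, c, hb, hc, hbc⟩ ⟨a, ha⟩
    have hb' : b ∈ ({a} : Finset (Fin n)) := ha ▸ Finset.mem_compl.2 hb
    have hc' : c ∈ ({a} : Finset (Fin n)) := ha ▸ Finset.mem_compl.2 hc
    rw [Finset.mem_singleton] at hb' hc'
    exact hbc (hb'.trans hc'.symm)

/-! ### Distances -/

lemma dist_eq_one {u v : Vx n F} (h : SSet u.1 ≠ SSet v.1)
    (hu : SSet u.1 ∪ SSet v.1 = Finset.univ) :
    (comaxGraph (∀ i, F i)).dist u v = 1 :=
  SimpleGraph.dist_eq_one_iff_adj.2 (adj_iff.2 ⟨h, hu⟩)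

lemma dist_eq_two {u v : Vx n F} (h : SSet u.1 ∪ SSet v.1 ≠ Finset.univ)
    (hi : (SSet u.1 ∩ SSet v.1).Nonempty) (hne : u ≠ v) :
    (comaxGraph (∀ i, F i)).dist u v = 2 := by
  set G := comaxGraph (∀ i, F i)
  set S := SSet u.1
  set T := SSet v.1
  have hw1 : (S ∩ T)ᶜ ≠ ∅ := by
    obtain ⟨a, ha⟩ := exists_not_mem_of_ne_univ' (show S ≠ Finset.univ from vx_ne_univ u)
    refine Finset.nonempty_iff_ne_empty.1 ⟨a, Finset.mem_compl.2 fun hh => ha (Finset.mem_inter.1 hh).1⟩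
  have hw2 : (S ∩ T)ᶜ ≠ Finset.univ := by
    intro hh
    obtain ⟨a, ha⟩ := hi
    have : a ∈ (S ∩ T)ᶜ := hh ▸ Finset.mem_univ a
    exact Finset.mem_compl.1 this ha
  set w : Vx n F := mkV ((S ∩ T)ᶜ) hw1 hw2 with hwdef
  have hadj1 : G.Adj u w := by
    rw [adj_iff]
    constructor
    · rw [SSet_mkV]
      intro hh
      obtain ⟨a, ha⟩ := hi
      have h1 : a ∈ S := (Finset.mem_inter.1 ha).1
      have h2 : a ∉ (S ∩ T)ᶜ := fun hh2 => Finset.mem_compl.1 hh2 ha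
      rw [← hh] at h2
      exact h2 h1
    · rw [SSet_mkV]
      rw [Finset.eq_univ_iff_forall]
      intro i
      by_cases hiS : i ∈ S ∩ T
      · exact Finset.mem_union_left _ (Finset.mem_inter.1 hiS).1
      · exact Finset.mem_union_right _ (Finset.mem_compl.2 hiS)
  have hadj2 : G.Adj w v := by
    rw [adj_iff]
    constructor
    · rw [SSet_mkV]
      intro hh
      obtain ⟨a, ha⟩ := hi
      have h1 : a ∈ T := (Finset.mem_inter.1 ha).2
      have h2 : a ∉ (S ∩ T)ᶜ := fun hh2 => Finset.mem_compl.1 hh2 ha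
      rw [hh] at h2
      exact h2 h1
    · rw [SSet_mkV]
      rw [Finset.eq_univ_iff_forall]
      intro i
      by_cases hiS : i ∈ S ∩ T
      · exact Finset.mem_union_right _ (Finset.mem_inter.1 hiS).2
      · exact Finset.mem_union_left _ (Finset.mem_compl.2 hiS)
  have hle : G.dist u v ≤ 2 := by
    have := SimpleGraph.dist_le (SimpleGraph.Walk.cons hadj1 (SimpleGraph.Walk.cons hadj2 SimpleGraph.Walk.nil))
    simpa using this
  have h0 : G.dist u v ≠ 0 := by
    rw [SimpleGraph.dist_ne_zero_iff_ne_and_reachable]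
    exact ⟨hne, SimpleGraph.Walk.reachable (SimpleGraph.Walk.cons hadj1 (SimpleGraph.Walk.cons hadj2 SimpleGraph.Walk.nil))⟩
  have h1 : G.dist u v ≠ 1 := by
    intro hh
    have := adj_iff.1 (SimpleGraph.dist_eq_one_iff_adj.1 hh)
    exact h this.2
  omega

lemma dist_eq_three {u v : Vx n F} (h : SSet u.1 ∪ SSet v.1 ≠ Finset.univ)
    (hi : SSet u.1 ∩ SSet v.1 = ∅) :
    (comaxGraph (∀ i, F i)).dist u v = 3 := by
  set G := comaxGraph (∀ i, F i)
  set S := SSet u.1 with hS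
  set T := SSet v.1 with hT
  have hSne : S ≠ ∅ := vx_ne_empty u
  have hTne : T ≠ ∅ := vx_ne_empty v
  have hSuniv : S ≠ Finset.univ := vx_ne_univ u
  have hTuniv : T ≠ Finset.univ := vx_ne_univ v
  have hST : S ≠ T := by
    intro hh
    rw [hh, Finset.inter_self] at hi
    exact hTne hi
  have hne : u ≠ v := fun hh => hST (by rw [vx_eq_iff] at hh; exact hh)
  have hw1c : Sᶜ ≠ ∅ := by
    obtain ⟨a, ha⟩ := exists_not_mem_of_ne_univ' hSuniv
    exact Finset.nonempty_iff_ne_empty.1 ⟨a, Finset.mem_compl.2 ha⟩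
  have hw1u : Sᶜ ≠ Finset.univ := by
    intro hh
    obtain ⟨a, ha⟩ := Finset.nonempty_iff_ne_empty.2 hSne
    exact Finset.mem_compl.1 (hh ▸ Finset.mem_univ a) ha
  have hw2c : Tᶜ ≠ ∅ := by
    obtain ⟨a, ha⟩ := exists_not_mem_of_ne_univ' hTuniv
    exact Finset.nonempty_iff_ne_empty.1 ⟨a, Finset.mem_compl.2 ha⟩
  have hw2u : Tᶜ ≠ Finset.univ := by
    intro hh
    obtain ⟨a, ha⟩ := Finset.nonempty_iff_ne_empty.2 hTne
    exact Finset.mem_compl.1 (hh ▸ Finset.mem_univ a) ha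
  set w1 : Vx n F := mkV Sᶜ hw1c hw1u
  set w2 : Vx n F := mkV Tᶜ hw2c hw2u
  have hadj1 : G.Adj u w1 := by
    rw [adj_iff, SSet_mkV]
    refine ⟨?_, by rw [← hS, Finset.union_compl]⟩
    intro hh
    obtain ⟨a, ha⟩ := Finset.nonempty_iff_ne_empty.2 hSne
    exact Finset.mem_compl.1 (hh ▸ ha) ha
  have hadj2 : G.Adj w1 w2 := by
    rw [adj_iff, SSet_mkV, SSet_mkV]
    constructor
    · intro hh
      exact hST (by rw [← compl_compl S, hh, compl_compl])
    · rw [← Finset.compl_inter, hi, Finset.compl_empty]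
  have hadj3 : G.Adj w2 v := by
    rw [adj_iff, SSet_mkV]
    constructor
    · intro hh
      obtain ⟨a, ha⟩ := Finset.nonempty_iff_ne_empty.2 hTne
      exact Finset.mem_compl.1 (hh ▸ ha) ha
    · rw [← hT, Finset.union_comm]
      exact Finset.union_compl T
  have hle : G.dist u v ≤ 3 := by
    simpa using SimpleGraph.dist_le (SimpleGraph.Walk.cons hadj1 (SimpleGraph.Walk.cons hadj2 (SimpleGraph.Walk.cons hadj3 SimpleGraph.Walk.nil)))
  have hr : G.Reachable u v := SimpleGraph.Walk.reachable (SimpleGraph.Walk.cons hadj1 (SimpleGraph.Walk.cons hadj2 (SimpleGraph.Walk.cons hadj3 SimpleGraph.Walk.nil)))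
  have h0 : G.dist u v ≠ 0 := SimpleGraph.dist_ne_zero_iff_ne_and_reachable.2 ⟨hne, hr⟩
  have h1 : G.dist u v ≠ 1 := by
    intro hh
    exact h (adj_iff.1 (SimpleGraph.dist_eq_one_iff_adj.1 hh)).2
  have h2 : G.dist u v ≠ 2 := by
    intro hh
    obtain ⟨p, hp⟩ := hr.exists_walk_length_eq_dist
    rw [hh] at hp
    cases p with
    | nil => simp at hp
    | @cons _ b _ hadj q =>
      cases q with
      | nil => simp at hp
      | @cons _ c _ hadj2' q2 =>
        cases q2 with
        | nil =>
          -- middle vertex b adjacent to both u and v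
          have ha1 := adj_iff.1 hadj
          have ha2 := adj_iff.1 hadj2'
          have : SSet b.1 = Finset.univ := by
            rw [Finset.eq_univ_iff_forall]
            intro i
            by_cases hiS : i ∈ S
            · by_cases hiT : i ∈ T
              · exact absurd (Finset.mem_inter.2 ⟨hiS, hiT⟩) (by rw [hi]; exact Finset.notMem_empty i)
              · have := ha2.2 ▸ Finset.mem_univ i
                rcases Finset.mem_union.1 (ha2.2.symm ▸ Finset.mem_univ i) with h' | h'
                · exact h'
                · exact absurd h' hiT
            · rcases Finset.mem_union.1 (ha1.2.symm ▸ Finset.mem_univ i) with h' | h'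
              · exact absurd h' hiS
              · exact h'
          exact vx_ne_univ b this
        | cons _ _ => simp at hp
  omega

lemma reach (u v : Vx n F) : (comaxGraph (∀ i, F i)).Reachable u v := by
  by_cases hne : u = v
  · subst hne; exact SimpleGraph.Reachable.refl u
  · have hST : SSet u.1 ≠ SSet v.1 ∨ SSet u.1 = SSet v.1 := ne_or_eq _ _
    by_cases h1 : SSet u.1 ∪ SSet v.1 = Finset.univ
    · by_cases hST : SSet u.1 = SSet v.1
      · exact absurd (vx_eq_iff.2 hST) hne
      · exact SimpleGraph.Reachable.of_dist_ne_zero (by rw [dist_eq_one hST h1]; omega)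
    · by_cases h2 : (SSet u.1 ∩ SSet v.1) = ∅
      · exact SimpleGraph.Reachable.of_dist_ne_zero (by rw [dist_eq_three h1 h2]; omega)
      · exact SimpleGraph.Reachable.of_dist_ne_zero
          (by rw [dist_eq_two h1 (Finset.nonempty_iff_ne_empty.2 h2) hne]; omega)

lemma dist_le_three (u v : Vx n F) : (comaxGraph (∀ i, F i)).dist u v ≤ 3 := by
  by_cases hne : u = v
  · subst hne; rw [SimpleGraph.dist_self]; omega
  · by_cases h1 : SSet u.1 ∪ SSet v.1 = Finset.univ
    · by_cases hST : SSet u.1 = SSet v.1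
      · exact absurd (vx_eq_iff.2 hST) hne
      · rw [dist_eq_one hST h1]; omega
    · by_cases h2 : (SSet u.1 ∩ SSet v.1) = ∅
      · rw [dist_eq_three h1 h2]
      · rw [dist_eq_two h1 (Finset.nonempty_iff_ne_empty.2 h2) hne]; omega

end Graph


section MMD

open Finset SimpleGraph

variable {n : ℕ} {F : Fin n → Type*} [∀ i, Field (F i)]

lemma two_le_dist {u v : Vx n F} (hne : SSet u.1 ≠ SSet v.1)
    (hun : SSet u.1 ∪ SSet v.1 ≠ Finset.univ) :
    2 ≤ (comaxGraph (∀ i, F i)).dist u v := by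
  have h0 : (comaxGraph (∀ i, F i)).dist u v ≠ 0 :=
    SimpleGraph.dist_ne_zero_iff_ne_and_reachable.2
      ⟨fun hh => hne (by rw [hh]), reach u v⟩
  have h1 : (comaxGraph (∀ i, F i)).dist u v ≠ 1 := by
    intro hh
    exact hun (adj_iff.1 (SimpleGraph.dist_eq_one_iff_adj.1 hh)).2
  omega

lemma mdf_of {u v : Vx n F} (h1 : SSet u.1 ∪ SSet v.1 ≠ Finset.univ)
    (h3 : ¬ SSet v.1 ⊆ SSet u.1) (hi : (SSet u.1 ∩ SSet v.1).Nonempty) :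
    MaximallyDistantFrom (comaxGraph (∀ i, F i)) u v := by
  intro w hw
  have hne : u ≠ v := fun hh => h3 (by rw [vx_eq_iff.1 hh])
  rw [dist_eq_two h1 hi hne]
  by_cases hwv : w = v
  · subst hwv; rw [SimpleGraph.dist_self]; omega
  · have hsets : SSet v.1 ≠ SSet w.1 := fun hh => hwv (vx_eq_iff.2 hh.symm)
    by_cases hun : SSet v.1 ∪ SSet w.1 = Finset.univ
    · rw [dist_eq_one hsets hun]; omega
    · have hinter : (SSet v.1 ∩ SSet w.1).Nonempty := by
        rw [Finset.nonempty_iff_ne_empty]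
        intro hcon
        apply h3
        intro i hiv
        rcases Finset.mem_union.1 ((adj_iff.1 hw).2 ▸ Finset.mem_univ i) with h' | h'
        · exact h'
        · exact absurd (Finset.mem_inter.2 ⟨hiv, h'⟩)
            (by rw [hcon]; exact Finset.notMem_empty i)
      rw [dist_eq_two hun hinter (fun hh => hwv hh.symm)]

lemma mmd_of {u v : Vx n F} (h1 : SSet u.1 ∪ SSet v.1 ≠ Finset.univ)
    (h2 : ¬ SSet u.1 ⊆ SSet v.1) (h3 : ¬ SSet v.1 ⊆ SSet u.1) :
    MutuallyMaximallyDistant (comaxGraph (∀ i, F i)) u v := by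
  by_cases hi : SSet u.1 ∩ SSet v.1 = ∅
  · have hd3 := dist_eq_three h1 hi
    constructor
    · intro w _
      rw [hd3]; exact dist_le_three v w
    · intro w _
      have hcomm : (comaxGraph (∀ i, F i)).dist v u = 3 := by
        rw [SimpleGraph.dist_comm]; exact hd3
      rw [hcomm]; exact dist_le_three u w
  · have hi' := Finset.nonempty_iff_ne_empty.2 hi
    refine ⟨mdf_of h1 h3 hi', mdf_of ?_ h2 ?_⟩
    · rw [Finset.union_comm]; exact h1
    · rw [Finset.inter_comm]; exact hi'

lemma mmd_break_d1 {u v : Vx n F} (hvmax : ¬ v.1.IsMaximal) (hne : u ≠ v)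
    (hun : SSet u.1 ∪ SSet v.1 = Finset.univ) :
    ¬ MutuallyMaximallyDistant (comaxGraph (∀ i, F i)) u v := by
  rintro ⟨hA, -⟩
  set S := SSet u.1 with hS
  set T := SSet v.1 with hT
  have hsets : S ≠ T := fun hh => hne (vx_eq_iff.2 hh)
  have hd1 : (comaxGraph (∀ i, F i)).dist u v = 1 := dist_eq_one hsets hun
  have hScne : Sᶜ ≠ ∅ := by
    obtain ⟨a, ha⟩ := exists_not_mem_of_ne_univ' (vx_ne_univ u)
    exact Finset.nonempty_iff_ne_empty.1 ⟨a, Finset.mem_compl.2 ha⟩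
  by_cases hc : Sᶜ = T
  · obtain ⟨a, b, haT, hbT, hab⟩ := nonmax_iff.1 hvmax
    -- a, b ∉ T = Sᶜ, so a, b ∈ S
    have haS : a ∈ S := by
      by_contra hh
      exact haT (by rw [← hT, ← hc]; exact Finset.mem_compl.2 hh)
    have hw1 : Sᶜ ∪ {a} ≠ ∅ := by
      intro hh
      exact absurd (hh ▸ Finset.mem_union_right _ (Finset.mem_singleton_self a))
        (Finset.notMem_empty a)
    have hw2 : Sᶜ ∪ {a} ≠ Finset.univ := by
      intro hh
      have hb : b ∈ Sᶜ ∪ {a} := hh ▸ Finset.mem_univ b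
      rcases Finset.mem_union.1 hb with h' | h'
      · exact hbT (by rw [← hT, ← hc]; exact h')
      · exact hab (Finset.mem_singleton.1 h').symm
    set w : Vx n F := mkV (Sᶜ ∪ {a}) hw1 hw2
    have hadj : (comaxGraph (∀ i, F i)).Adj u w := by
      rw [adj_iff, SSet_mkV]
      constructor
      · intro hh
        obtain ⟨c, hcc⟩ := Finset.nonempty_iff_ne_empty.2 hScne
        have : c ∈ SSet u.1 := by rw [hh]; exact Finset.mem_union_left _ hcc
        exact Finset.mem_compl.1 hcc (hS ▸ this)
      · rw [Finset.eq_univ_iff_forall]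
        intro i
        by_cases hiS : i ∈ S
        · exact Finset.mem_union_left _ hiS
        · exact Finset.mem_union_right _ (Finset.mem_union_left _ (Finset.mem_compl.2 hiS))
    have hge : 2 ≤ (comaxGraph (∀ i, F i)).dist v w := by
      apply two_le_dist
      · rw [SSet_mkV, ← hT]
        intro hh
        apply haT
        rw [← hT, hh]
        exact Finset.mem_union_right _ (Finset.mem_singleton_self a)
      · rw [SSet_mkV, ← hT, ← hc]
        intro hh
        have hb : b ∈ Sᶜ ∪ (Sᶜ ∪ {a}) := hh ▸ Finset.mem_univ b
        rcases Finset.mem_union.1 hb with h' | h'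
        · exact hbT (by rw [← hT, ← hc]; exact h')
        · rcases Finset.mem_union.1 h' with h'' | h''
          · exact hbT (by rw [← hT, ← hc]; exact h'')
          · exact hab (Finset.mem_singleton.1 h'').symm
    have := hA w hadj
    rw [hd1] at this
    omega
  · have hScu : Sᶜ ≠ Finset.univ := by
      intro hh
      obtain ⟨a, ha⟩ := Finset.nonempty_iff_ne_empty.2 (vx_ne_empty u)
      exact Finset.mem_compl.1 (hh ▸ Finset.mem_univ a) ha
    set w : Vx n F := mkV Sᶜ hScne hScu
    have hadj : (comaxGraph (∀ i, F i)).Adj u w := by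
      rw [adj_iff, SSet_mkV]
      refine ⟨?_, by rw [← hS, Finset.union_compl]⟩
      intro hh
      obtain ⟨a, ha⟩ := Finset.nonempty_iff_ne_empty.2 (vx_ne_empty u)
      exact Finset.mem_compl.1 (hh ▸ ha) ha
    have hge : 2 ≤ (comaxGraph (∀ i, F i)).dist v w := by
      apply two_le_dist
      · rw [SSet_mkV, ← hT]
        exact fun hh => hc hh.symm
      · rw [SSet_mkV, ← hT]
        intro hh
        -- T ∪ Sᶜ = univ forces S ⊆ T, then T = univ
        have hsub : S ⊆ T := by
          intro i hiS
          rcases Finset.mem_union.1 (hh ▸ Finset.mem_univ i) with h' | h'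
          · exact h'
          · exact absurd hiS (Finset.mem_compl.1 h')
        apply vx_ne_univ v
        rw [← hT, Finset.eq_univ_iff_forall]
        intro i
        rcases Finset.mem_union.1 (hun ▸ Finset.mem_univ i) with h' | h'
        · exact hsub h'
        · exact h'
    have := hA w hadj
    rw [hd1] at this
    omega

lemma mmd_break_sub {u v : Vx n F} (hne : u ≠ v) (hsub : SSet u.1 ⊆ SSet v.1) :
    ¬ MutuallyMaximallyDistant (comaxGraph (∀ i, F i)) u v := by
  rintro ⟨-, hB⟩
  set S := SSet u.1 with hS
  set T := SSet v.1 with hT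
  have hsets : S ≠ T := fun hh => hne (vx_eq_iff.2 hh)
  have hun : S ∪ T ≠ Finset.univ := by
    rw [Finset.union_eq_right.2 hsub]
    exact vx_ne_univ v
  have hd2 : (comaxGraph (∀ i, F i)).dist u v = 2 := by
    apply dist_eq_two hun _ hne
    obtain ⟨a, ha⟩ := Finset.nonempty_iff_ne_empty.2 (vx_ne_empty u)
    exact ⟨a, Finset.mem_inter.2 ⟨ha, hsub ha⟩⟩
  have hTcne : Tᶜ ≠ ∅ := by
    obtain ⟨a, ha⟩ := exists_not_mem_of_ne_univ' (vx_ne_univ v)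
    exact Finset.nonempty_iff_ne_empty.1 ⟨a, Finset.mem_compl.2 ha⟩
  have hTcu : Tᶜ ≠ Finset.univ := by
    intro hh
    obtain ⟨a, ha⟩ := Finset.nonempty_iff_ne_empty.2 (vx_ne_empty v)
    exact Finset.mem_compl.1 (hh ▸ Finset.mem_univ a) ha
  set w : Vx n F := mkV Tᶜ hTcne hTcu
  have hadj : (comaxGraph (∀ i, F i)).Adj v w := by
    rw [adj_iff, SSet_mkV]
    refine ⟨?_, by rw [← hT, Finset.union_compl]⟩
    intro hh
    obtain ⟨a, ha⟩ := Finset.nonempty_iff_ne_empty.2 (vx_ne_empty v)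
    exact Finset.mem_compl.1 (hh ▸ ha) ha
  have hd3 : (comaxGraph (∀ i, F i)).dist u w = 3 := by
    apply dist_eq_three
    · rw [SSet_mkV, ← hS]
      intro hh
      -- S ∪ Tᶜ = univ forces T ⊆ S, i.e. S = T, contradiction
      apply hsets
      apply Finset.Subset.antisymm hsub
      intro i hiT
      rcases Finset.mem_union.1 (hh ▸ Finset.mem_univ i) with h' | h'
      · exact h'
      · exact absurd hiT (Finset.mem_compl.1 h')
    · rw [SSet_mkV, ← hS]
      rw [Finset.eq_empty_iff_forall_notMem]
      intro i hi
      obtain ⟨hi1, hi2⟩ := Finset.mem_inter.1 hi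
      exact Finset.mem_compl.1 hi2 (hsub hi1)
  have := hB w hadj
  have hcomm : (comaxGraph (∀ i, F i)).dist v u = 2 := by
    rw [SimpleGraph.dist_comm]; exact hd2
  rw [hcomm, hd3] at this
  omega

lemma not_mmd_of_max (hn : 3 ≤ n) {u v : Vx n F} (hmax : u.1.IsMaximal)
    (hne : v ≠ u) : ¬ MutuallyMaximallyDistant (comaxGraph (∀ i, F i)) u v := by
  obtain ⟨a, ha⟩ := max_iff.1 hmax
  set S := SSet u.1 with hS
  set T := SSet v.1 with hT
  have haS : a ∉ S := Finset.mem_compl.1 (ha ▸ Finset.mem_singleton_self a)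
  have hTS : T ≠ S := fun hh => hne (vx_eq_iff.2 hh)
  -- the singleton {a} is a vertex
  have hauniv : ({a} : Finset (Fin n)) ≠ Finset.univ := by
    intro hh
    have hcard := congrArg Finset.card hh
    rw [Finset.card_singleton, Finset.card_univ, Fintype.card_fin] at hcard
    omega
  have hane : ({a} : Finset (Fin n)) ≠ ∅ := Finset.singleton_ne_empty a
  set wa : Vx n F := mkV {a} hane hauniv
  have hadja : (comaxGraph (∀ i, F i)).Adj u wa := by
    rw [adj_iff, SSet_mkV]
    constructor
    · intro hh
      apply haS
      rw [hS, hh]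
      exact Finset.mem_singleton_self a
    · rw [Finset.eq_univ_iff_forall]
      intro i
      by_cases hiS : i ∈ S
      · exact Finset.mem_union_left _ hiS
      · have : i ∈ Sᶜ := Finset.mem_compl.2 hiS
        rw [ha] at this
        exact Finset.mem_union_right _ this
  -- key fact: T ∪ {a} = univ is impossible
  have hTa_univ : T ∪ {a} ≠ Finset.univ := by
    intro hh
    apply hTS
    have hTc : Tᶜ = {a} := by
      ext i
      rw [Finset.mem_compl, Finset.mem_singleton]
      constructor
      · intro hiT
        rcases Finset.mem_union.1 (hh ▸ Finset.mem_univ i) with h' | h'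
        · exact absurd h' hiT
        · exact Finset.mem_singleton.1 h'
      · intro hia
        subst hia
        intro hiT
        apply vx_ne_univ v
        rw [← hT]
        rw [Finset.union_eq_left.2 (Finset.singleton_subset_iff.2 hiT)] at hh
        exact hh
    rw [← compl_compl T, hTc, ← ha, compl_compl]
  by_cases hun : S ∪ T = Finset.univ
  · rintro ⟨hA, -⟩
    have hd1 : (comaxGraph (∀ i, F i)).dist u v = 1 :=
      dist_eq_one (fun hh => hTS hh.symm) hun
    by_cases hTa : T = {a}
    · -- use w = {a, b} with b ∈ S
      obtain ⟨b, hbS⟩ := Finset.nonempty_iff_ne_empty.2 (vx_ne_empty u)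
      have hba : b ≠ a := fun hh => haS (hh ▸ hbS)
      have habne : ({a, b} : Finset (Fin n)) ≠ ∅ := by
        intro hh
        exact absurd (hh ▸ Finset.mem_insert_self a {b}) (Finset.notMem_empty a)
      have habuniv : ({a, b} : Finset (Fin n)) ≠ Finset.univ := by
        intro hh
        have hcard := congrArg Finset.card hh
        rw [Finset.card_univ, Fintype.card_fin] at hcard
        have h2 : ({a, b} : Finset (Fin n)).card ≤ 2 :=
          (Finset.card_insert_le a {b}).trans (by simp)
        omega
      set w : Vx n F := mkV {a, b} habne habuniv
      have hadj : (comaxGraph (∀ i, F i)).Adj u w := by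
        rw [adj_iff, SSet_mkV]
        constructor
        · intro hh
          apply haS
          rw [hS, hh]
          exact Finset.mem_insert_self a {b}
        · rw [Finset.eq_univ_iff_forall]
          intro i
          by_cases hiS : i ∈ S
          · exact Finset.mem_union_left _ hiS
          · have : i ∈ Sᶜ := Finset.mem_compl.2 hiS
            rw [ha, Finset.mem_singleton] at this
            exact Finset.mem_union_right _ (this ▸ Finset.mem_insert_self a {b})
      have hge : 2 ≤ (comaxGraph (∀ i, F i)).dist v w := by
        apply two_le_dist
        · rw [SSet_mkV, ← hT, hTa]
          intro hh
          have hb2 : b ∈ ({a, b} : Finset (Fin n)) := by simp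
          rw [← hh] at hb2
          exact hba (Finset.mem_singleton.1 hb2)
        · rw [SSet_mkV, ← hT, hTa]
          intro hh
          rw [Finset.union_eq_right.2 (by simp)] at hh
          exact habuniv hh
      have := hA w hadj
      rw [hd1] at this
      omega
    · -- use w = {a}
      have hge : 2 ≤ (comaxGraph (∀ i, F i)).dist v wa := by
        apply two_le_dist
        · rw [SSet_mkV, ← hT]
          exact hTa
        · rw [SSet_mkV, ← hT]
          exact hTa_univ
      have := hA wa hadja
      rw [hd1] at this
      omega
  · -- S ∪ T ≠ univ: here T ⊆ S and a ∉ T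
    obtain ⟨c, hc⟩ := exists_not_mem_of_ne_univ' hun
    have hcS : c ∉ S := fun hh => hc (Finset.mem_union_left _ hh)
    have hcT : c ∉ T := fun hh => hc (Finset.mem_union_right _ hh)
    have hca : c = a := by
      have : c ∈ Sᶜ := Finset.mem_compl.2 hcS
      rw [ha, Finset.mem_singleton] at this
      exact this
    subst hca
    have hsub : T ⊆ S := by
      intro i hiT
      by_contra hiS
      have : i ∈ Sᶜ := Finset.mem_compl.2 hiS
      rw [ha, Finset.mem_singleton] at this
      exact hcT (this ▸ hiT)
    rintro ⟨hA, -⟩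
    have hd2 : (comaxGraph (∀ i, F i)).dist u v = 2 := by
      apply dist_eq_two hun _ (fun hh => hne (hh.symm))
      obtain ⟨t, ht⟩ := Finset.nonempty_iff_ne_empty.2 (vx_ne_empty v)
      exact ⟨t, Finset.mem_inter.2 ⟨hsub ht, ht⟩⟩
    have hd3 : (comaxGraph (∀ i, F i)).dist v wa = 3 := by
      apply dist_eq_three
      · rw [SSet_mkV, ← hT]
        exact hTa_univ
      · rw [SSet_mkV, ← hT]
        rw [Finset.eq_empty_iff_forall_notMem]
        intro i hi
        obtain ⟨hi1, hi2⟩ := Finset.mem_inter.1 hi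
        rw [Finset.mem_singleton] at hi2
        exact hcT (hi2 ▸ hi1)
    have := hA wa hadja
    rw [hd2, hd3] at this
    omega

end MMD

/-- For `R ≅ F_1 × ⋯ × F_n` a product of fields, `n ≥ 3`:
`∂(Γ(R)) = V(Γ(R)) \ Max(R)`, and two distinct non-maximal vertices `I`, `J` are
mutually maximally distant in `Γ(R)` (i.e. adjacent in `Γ(R)_SR`) iff `I + J ≠ R`,
`I ⊄ J` and `J ⊄ I`; that is, `Γ(R)_SR = Γ(R)*`. -/
theorem stmt_10 (n : ℕ) (hn : 3 ≤ n) (F : Fin n → Type*) [∀ i, Field (F i)] :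
    boundarySet (comaxGraph (∀ i, F i)) = {v : {I : Ideal (∀ i, F i) // IsComaxVertex (∀ i, F i) I} | ¬ v.1.IsMaximal} ∧
    (∀ u v : {I : Ideal (∀ i, F i) // IsComaxVertex (∀ i, F i) I}, ¬ u.1.IsMaximal → ¬ v.1.IsMaximal → u ≠ v →
      (MutuallyMaximallyDistant (comaxGraph (∀ i, F i)) u v ↔
        (u.1 ⊔ v.1 ≠ ⊤ ∧ ¬ u.1 ≤ v.1 ∧ ¬ v.1 ≤ u.1))) := by
  constructor
  · ext v
    simp only [boundarySet, Set.mem_setOf_eq]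
    constructor
    · rintro ⟨w, hwne, hmmd⟩ hmax
      exact not_mmd_of_max hn hmax hwne hmmd
    · intro hnmax
      obtain ⟨b, c, hb, hc, hbc⟩ := nonmax_iff.1 hnmax
      obtain ⟨a, haS⟩ := Finset.nonempty_iff_ne_empty.2 (vx_ne_empty v)
      have hab : a ≠ b := fun hh => hb (hh ▸ haS)
      have hT1 : insert b ((SSet v.1).erase a) ≠ ∅ := by
        intro hh
        exact absurd (hh ▸ Finset.mem_insert_self b _) (Finset.notMem_empty b)
      have hT2 : insert b ((SSet v.1).erase a) ≠ Finset.univ := by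
        intro hh
        have hcmem : c ∈ insert b ((SSet v.1).erase a) := hh ▸ Finset.mem_univ c
        rcases Finset.mem_insert.1 hcmem with h' | h'
        · exact hbc h'.symm
        · exact hc (Finset.mem_of_mem_erase h')
      refine ⟨mkV _ hT1 hT2, ?_, ?_⟩
      · intro hh
        have h2 := vx_eq_iff.1 hh
        rw [SSet_mkV] at h2
        exact hb (h2 ▸ Finset.mem_insert_self b _)
      · apply mmd_of
        · rw [SSet_mkV]
          intro hh
          have hcmem : c ∈ SSet v.1 ∪ insert b ((SSet v.1).erase a) := hh ▸ Finset.mem_univ c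
          rcases Finset.mem_union.1 hcmem with h' | h'
          · exact hc h'
          · rcases Finset.mem_insert.1 h' with h'' | h''
            · exact hbc h''.symm
            · exact hc (Finset.mem_of_mem_erase h'')
        · rw [SSet_mkV]
          intro hsub
          rcases Finset.mem_insert.1 (hsub haS) with h' | h'
          · exact hab h'
          · exact Finset.notMem_erase a _ h'
        · rw [SSet_mkV]
          intro hsub
          exact hb (hsub (Finset.mem_insert_self b _))
  · intro u v humax hvmax hne
    constructor
    · intro hmmd
      refine ⟨?_, ?_, ?_⟩
      · intro h
        exact mmd_break_d1 hvmax hne (sup_eq_top_iff.1 h) hmmd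
      · intro h
        exact mmd_break_sub hne (le_iff.1 h) hmmd
      · intro h
        exact mmd_break_sub hne.symm (le_iff.1 h) ⟨hmmd.2, hmmd.1⟩
    · rintro ⟨hsup, huv, hvu⟩
      exact mmd_of (fun hh => hsup (sup_eq_top_iff.2 hh))
        (fun hh => huv (le_iff.2 hh)) (fun hh => hvu (le_iff.2 hh))

end CoMax
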